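/- Let φ(n,ω,x) = f_{ω_{n-1}} ∘ ⋯ ∘ f_{ω_0}(x) be a random iteration on a metric space S over (Ω = E^ℤ, ℙ = ν^ℤ) with shift σ, and let π : Ω → S satisfy the invariance f_{ω_0}(π(ω)) = π(σ(ω)) a.e. Suppose there exist a measurable c : Ω → [0,∞), r < 1 and m₀ such that for ℙ-a.e. ω, d(φ(n,ω,x), φ(n,ω,y)) ≤ c(ω) rⁿ for all x,y ∈ S and n ≥ m₀. Then for every x ∈ S, d(φ(n,ω,x), π(σⁿ(ω))) → 0 as n → ∞ for ℙ-a.e. ω (π is a forward random attractor). -/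

import Mathlib

/-!
Iterating the invariance equation gives `π (σⁿ ω) = φ(n, ω, π ω)` almost surely, since the
shift preserves `ℙ`. Hence `d(φ(n, ω, x), π (σⁿ ω))` is a distance between two orbits of the
same random composition, which the contraction hypothesis bounds by `c ω * rⁿ → 0`.
-/

open MeasureTheory Filter

variable {E S : Type*}

/-- The two-sided shift on `Ω = E^ℤ`: `(σ ω) n = ω (n+1)`. -/
def shift (ω : ℤ → E) : ℤ → E := fun n => ω (n + 1)

/-- The random iteration `φ(n, ω, x) = f_{ω_{n-1}} ∘ ⋯ ∘ f_{ω_0}(x)`. -/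
def iterComp (f : E → S → S) (ω : ℤ → E) : ℕ → S → S
  | 0 => id
  | n + 1 => f (ω n) ∘ iterComp f ω n

lemma MeasureTheory.Measure.QuasiMeasurePreserving.ae_forall_iterate {α : Type*}
    [MeasurableSpace α] {μ : Measure α} {T : α → α} (hT : Measure.QuasiMeasurePreserving T μ μ)
    {p : α → Prop} (h : ∀ᵐ a ∂μ, p a) : ∀ᵐ a ∂μ, ∀ n, p (T^[n] a) :=
  ae_all_iff.2 fun n => (hT.iterate n).ae h

lemma shift_iterate_apply (ω : ℤ → E) (k : ℕ) (m : ℤ) : (shift^[k] ω) m = ω (m + k) := by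
  induction k generalizing ω with
  | zero => simp
  | succ k ih =>
    rw [Function.iterate_succ_apply, ih, shift, Nat.cast_succ, add_assoc]

lemma iterComp_succ_apply (f : E → S → S) (ω : ℤ → E) (n : ℕ) (x : S) :
    iterComp f ω (n + 1) x = f (ω n) (iterComp f ω n x) :=
  rfl

lemma apply_shift_iterate_eq_iterComp {f : E → S → S} {π : (ℤ → E) → S} {ω : ℤ → E}
    (hinv : ∀ k, f ((shift^[k] ω) 0) (π (shift^[k] ω)) = π (shift (shift^[k] ω))) (n : ℕ) :
    π (shift^[n] ω) = iterComp f ω n (π ω) := by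
  induction n with
  | zero => rfl
  | succ n ih =>
    rw [Function.iterate_succ_apply', ← hinv n, ih, shift_iterate_apply, zero_add,
      iterComp_succ_apply]

lemma tendsto_const_mul_pow_nhds_zero_of_eventually_nonneg {C r : ℝ} (hr : r < 1)
    (hnonneg : ∀ᶠ n in atTop, 0 ≤ C * r ^ n) :
    Tendsto (fun n : ℕ => C * r ^ n) atTop (nhds 0) := by
  rcases le_or_gt 0 r with hr₀ | hr₀
  · simpa using (tendsto_pow_atTop_nhds_zero_of_lt_one hr₀ hr).const_mul C
  · -- for `r < 0` consecutive terms `C rⁿ` and `C rⁿ⁺¹ = r (C rⁿ)` cannot both be positive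
    have hzero : ∀ᶠ n in atTop, C * r ^ n = 0 := by
      filter_upwards [hnonneg, (tendsto_add_atTop_nat 1).eventually hnonneg] with n hn hn₁
      rw [pow_succ, ← mul_assoc] at hn₁
      exact le_antisymm (nonpos_of_mul_nonneg_left hn₁ hr₀) hn
    exact tendsto_const_nhds.congr' (hzero.mono fun n hn => hn.symm)

theorem stmt10_general [MeasurableSpace E] [MetricSpace S]
    (ℙ : Measure (ℤ → E))
    (hshift : MeasurePreserving (shift (E := E)) ℙ ℙ)
    (f : E → S → S) (π : (ℤ → E) → S)
    (hinv : ∀ᵐ ω ∂ℙ, f (ω 0) (π ω) = π (shift ω))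
    (c : (ℤ → E) → ℝ)
    (r : ℝ) (hr : r < 1) (m₀ : ℕ)
    (hcontr : ∀ᵐ ω ∂ℙ, ∀ x y : S, ∀ n, m₀ ≤ n →
      dist (iterComp f ω n x) (iterComp f ω n y) ≤ c ω * r ^ n) :
    ∀ x : S, ∀ᵐ ω ∂ℙ,
      Tendsto (fun n => dist (iterComp f ω n x) (π ((shift (E := E))^[n] ω)))
        atTop (nhds 0) := by
  intro x
  filter_upwards [hshift.quasiMeasurePreserving.ae_forall_iterate hinv, hcontr]
    with ω hinvω hcontrω
  have hbound : ∀ᶠ n in atTop,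
      dist (iterComp f ω n x) (π (shift^[n] ω)) ≤ c ω * r ^ n :=
    eventually_atTop.2 ⟨m₀, fun n hn => by
      rw [apply_shift_iterate_eq_iterComp hinvω]
      exact hcontrω x (π ω) n hn⟩
  exact squeeze_zero' (Eventually.of_forall fun _ => dist_nonneg) hbound
    (tendsto_const_mul_pow_nhds_zero_of_eventually_nonneg hr
      (hbound.mono fun _ hn => dist_nonneg.trans hn))

/-- Forward random attractor: if `π` satisfies the invariance equation a.s. and the random
compositions contract at rate `c(ω) rⁿ` for `n ≥ m₀`, then for every `x ∈ S`,
`d(φ(n,ω,x), π(σⁿ ω)) → 0` almost surely. -/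
theorem stmt10 [MeasurableSpace E] [MeasurableSpace S] [MetricSpace S]
    (ℙ : Measure (ℤ → E)) [IsProbabilityMeasure ℙ]
    (hshift : MeasurePreserving (shift (E := E)) ℙ ℙ)
    (f : E → S → S) (π : (ℤ → E) → S) (hπ : Measurable π)
    (hinv : ∀ᵐ ω ∂ℙ, f (ω 0) (π ω) = π (shift ω))
    (c : (ℤ → E) → ℝ) (hc : Measurable c) (hcpos : ∀ ω, 0 ≤ c ω)
    (r : ℝ) (hr : r < 1) (m₀ : ℕ)
    (hcontr : ∀ᵐ ω ∂ℙ, ∀ x y : S, ∀ n, m₀ ≤ n →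
      dist (iterComp f ω n x) (iterComp f ω n y) ≤ c ω * r ^ n) :
    ∀ x : S, ∀ᵐ ω ∂ℙ,
      Tendsto (fun n => dist (iterComp f ω n x) (π ((shift (E := E))^[n] ω)))
        atTop (nhds 0) :=
  stmt10_general ℙ hshift f π hinv c r hr m₀ hcontr
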